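/- arXiv:1105.4036 — 4 statements merged into one kernel-verified Lean document; each statement's English description precedes it below -/
import Mathlib

section
/- Let C be a cycle of length n with dissipative vertex p and other vertices v_1,...,v_{n-1} numbered counterclockwise. Label the recurrent configurations c_0, c_1, ..., c_{n-1}, where c_j(v_i) = 0 if i = j and 1 otherwise, and c_0 ≡ 1. Then for any configuration η on the non-dissipative vertices, the stabilization of c_j + η equals c_m where m ≡ j − Σ_{k=1}^{n-1} η(v_k)·k (mod n). -/
/-- The `n` recurrent configurations on the cycle of length `n` with
dissipative vertex `0`: `CycleCfg n j` has `0` chips at `v_j = j` and `1` chip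
at every other non-dissipative vertex; for `j = 0` it is constantly `1` on the
non-dissipative vertices. -/
def CycleCfg (n : ℕ) (j : ZMod n) : ZMod n → ℕ :=
  fun i => if i = 0 then 0 else if i = j then 0 else 1

/-- The number of chips at vertex `i` after firing each vertex `w` of the cycle
`u w` times, starting from the configuration `c` (vertex `i` has neighbours
`i + 1` and `i - 1`, and degree `2`). -/
def CycleToppleVal (n : ℕ) (c u : ZMod n → ℕ) (i : ZMod n) : ℤ :=
  (c i : ℤ) + u (i + 1) + u (i - 1) - 2 * u i

/-- `σ` is the stabilization of the configuration `c` on the cycle of length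
`n` with dissipative vertex `0`: there is a firing vector `u` (the odometer,
not firing the dissipative vertex) producing `σ` from `c`, with `σ` stable, and
`u` is minimal among all firing vectors yielding a stable nonnegative result
(least action principle). -/
def CycleIsStabilization (n : ℕ) (c σ : ZMod n → ℕ) : Prop :=
  ∃ u : ZMod n → ℕ, u 0 = 0 ∧ σ 0 = 0 ∧
    (∀ i : ZMod n, i ≠ 0 → (σ i : ℤ) = CycleToppleVal n c u i) ∧
    (∀ i : ZMod n, i ≠ 0 → σ i ≤ 1) ∧
    (∀ u' : ZMod n → ℕ, u' 0 = 0 →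
      (∀ i : ZMod n, i ≠ 0 →
        0 ≤ CycleToppleVal n c u' i ∧ CycleToppleVal n c u' i ≤ 1) →
      ∀ i, u i ≤ u' i)

/-! Allowing negative firings, `c` can be fired into `σ` iff `σ - c` lies in the image of the
reduced Laplacian. Firing the arc `1, …, b` gives `δ (b + 1) ≡ δ b + δ 1` modulo this lattice
(`δ b` is one chip at `b`), hence `f ≡ (∑ k, f k * k) • δ 1` and `n • δ 1 ≡ 0`. As
`∑ k, c_m k * k = ∑ k, k - m`, the difference `c_m - (c_j + η)` lies in the lattice, giving an
integer odometer `u`. A minimum principle (a function vanishing at the sink whose Laplacian is at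
most `1 - c_m` elsewhere is nonnegative) shows both `u ≥ 0` and, applied to `u' - u`, that `u` is
the least odometer. -/

namespace ZMod

variable {n : ℕ} [NeZero n]

lemma val_add_one_of_ne_one (hn : n ≠ 1) (a : ZMod n) :
    (a + 1).val = a.val + 1 ∨ ((a + 1).val = 0 ∧ a.val + 1 = n) := by
  rw [val_add, val_one'' hn]
  rcases Nat.lt_or_ge (a.val + 1) n with h | h
  · exact .inl (Nat.mod_eq_of_lt h)
  · have h : a.val + 1 = n := le_antisymm (val_lt a) h
    exact .inr ⟨by rw [h, Nat.mod_self], h⟩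

lemma exists_mem_add_one_not_mem {S : Set (ZMod n)} {a : ZMod n} (ha : a ∈ S) (h0 : 0 ∉ S) :
    ∃ i ∈ S, i + 1 ∉ S := by
  by_contra! h
  have hclosed : ∀ t : ℕ, a + t ∈ S := by
    intro t
    induction t with
    | zero => simpa using ha
    | succ t ih => simpa [add_assoc] using h _ ih
  exact h0 (by simpa using hclosed (-a).val)

lemma exists_mem_sub_one_not_mem {S : Set (ZMod n)} {a : ZMod n} (ha : a ∈ S) (h0 : 0 ∉ S) :
    ∃ i ∈ S, i - 1 ∉ S := by
  obtain ⟨i, hi, hi1⟩ := exists_mem_add_one_not_mem (S := Neg.neg ⁻¹' S) (a := -a)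
    (by simpa using ha) (by simpa using h0)
  refine ⟨-i, hi, fun h => hi1 ?_⟩
  simpa only [Set.mem_preimage, neg_add, sub_eq_add_neg] using (show -i - 1 ∈ S from h)

end ZMod

def cycleLaplacian (n : ℕ) : (ZMod n → ℤ) →+ (ZMod n → ℤ) where
  toFun u i := u (i + 1) + u (i - 1) - 2 * u i
  map_zero' := by ext; simp
  map_add' u v := by ext; simp only [Pi.add_apply]; ring

@[simp]
lemma cycleLaplacian_apply (n : ℕ) (u : ZMod n → ℤ) (i : ZMod n) :
    cycleLaplacian n u i = u (i + 1) + u (i - 1) - 2 * u i :=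
  rfl

lemma cycleToppleVal_eq (n : ℕ) (c u : ZMod n → ℕ) (i : ZMod n) :
    CycleToppleVal n c u i = c i + cycleLaplacian n (fun x => (u x : ℤ)) i := by
  rw [CycleToppleVal, cycleLaplacian_apply]
  ring

def cycleLaplacianLattice (n : ℕ) : AddSubgroup (ZMod n → ℤ) where
  carrier := {f | ∃ u : ZMod n → ℤ, u 0 = 0 ∧ ∀ i ≠ 0, f i = cycleLaplacian n u i}
  zero_mem' := ⟨0, rfl, by simp⟩
  add_mem' := by
    rintro f g ⟨u, hu0, hu⟩ ⟨v, hv0, hv⟩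
    exact ⟨u + v, by simp [hu0, hv0],
      fun i hi => by simp only [map_add, Pi.add_apply, hu i hi, hv i hi]⟩
  neg_mem' := by
    rintro f ⟨u, hu0, hu⟩
    exact ⟨-u, by simp [hu0], fun i hi => by simp only [map_neg, Pi.neg_apply, hu i hi]⟩

section Lattice

lemma mem_cycleLaplacianLattice_of_eq_zero {n : ℕ} {f : ZMod n → ℤ}
    (hf : ∀ i ≠ 0, f i = 0) :
    f ∈ cycleLaplacianLattice n :=
  ⟨0, rfl, by simpa using hf⟩

lemma single_zero_mem_cycleLaplacianLattice (n : ℕ) :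
    Pi.single (0 : ZMod n) 1 ∈ cycleLaplacianLattice n :=
  mem_cycleLaplacianLattice_of_eq_zero fun _ hi => Pi.single_eq_of_ne hi _

variable {n : ℕ} [NeZero n]

/-- Firing every vertex of the arc `1, …, b` once. -/
lemma single_add_one_sub_single_sub_single_one_mem (b : ZMod n) :
    Pi.single (b + 1) 1 - Pi.single b 1 - Pi.single 1 1 ∈ cycleLaplacianLattice n := by
  refine ⟨fun i => if 0 < i.val ∧ i.val ≤ b.val then 1 else 0, by simp, fun i hi => ?_⟩
  have hn : n ≠ 1 := by rintro rfl; exact hi (Subsingleton.elim _ _)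
  have hi0 : 0 < i.val := Nat.pos_of_ne_zero ((ZMod.val_eq_zero i).not.mpr hi)
  have hsub : (i - 1).val = i.val - 1 := by
    rw [ZMod.val_sub (by rw [ZMod.val_one'' hn]; omega), ZMod.val_one'' hn]
  have hin := ZMod.val_lt i
  have hbn := ZMod.val_lt b
  have h1 := ZMod.val_one'' hn
  simp only [cycleLaplacian_apply, Pi.sub_apply, Pi.single_apply,
    ← (ZMod.val_injective n).eq_iff, hsub, h1]
  rcases ZMod.val_add_one_of_ne_one hn i with hi1 | hi1 <;>
  rcases ZMod.val_add_one_of_ne_one hn b with hb1 | hb1 <;>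
  simp only [hi1, hb1] <;> split_ifs <;> omega

lemma single_natCast_sub_smul_single_one_mem (t : ℕ) :
    Pi.single (t : ZMod n) 1 - (t : ℤ) • Pi.single 1 1 ∈ cycleLaplacianLattice n := by
  induction t with
  | zero => simpa using single_zero_mem_cycleLaplacianLattice n
  | succ t ih =>
    convert add_mem (single_add_one_sub_single_sub_single_one_mem (t : ZMod n)) ih using 1
    push_cast
    rw [add_smul, one_smul]
    abel

lemma mem_cycleLaplacianLattice_of_sum_mul_eq_zero {f : ZMod n → ℤ}
    (hf : ∑ k, (f k : ZMod n) * k = 0) : f ∈ cycleLaplacianLattice n := by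
  set δ₁ : ZMod n → ℤ := Pi.single 1 1
  set N : ℤ := ∑ k, f k * k.val
  have hsingle :
      ∀ k, f k • Pi.single k 1 - (f k * k.val) • δ₁ ∈ cycleLaplacianLattice n := by
    intro k
    rw [mul_smul, ← smul_sub]
    exact zsmul_mem (by simpa using single_natCast_sub_smul_single_one_mem (n := n) k.val) _
  have hN : N • δ₁ ∈ cycleLaplacianLattice n := by
    obtain ⟨w, hw⟩ := (ZMod.intCast_zmod_eq_zero_iff_dvd N n).1 (by simpa [N] using hf)
    rw [hw, mul_comm, mul_smul]
    refine zsmul_mem ?_ w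
    simpa using sub_mem (single_zero_mem_cycleLaplacianLattice n)
      (single_natCast_sub_smul_single_one_mem (n := n) n)
  have hdecomp : f = ∑ k, (f k • Pi.single k 1 - (f k * k.val) • δ₁) + N • δ₁ := by
    rw [Finset.sum_sub_distrib, ← Finset.sum_smul, sub_add_cancel]
    simp_rw [← Pi.single_smul', smul_eq_mul, mul_one]
    exact (Finset.univ_sum_single f).symm
  rw [hdecomp]
  exact add_mem (sum_mem fun k _ => hsingle k) hN

end Lattice

section Recurrent

variable {n : ℕ} [NeZero n]

lemma cycleCfg_le_one (n : ℕ) (m i : ZMod n) : CycleCfg n m i ≤ 1 := by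
  unfold CycleCfg
  split_ifs <;> omega

lemma sum_cycleCfg_mul (m : ZMod n) :
    ∑ k, (CycleCfg n m k : ZMod n) * k = ∑ k, k - m := by
  have hterm : ∀ k, (CycleCfg n m k : ZMod n) * k = k - if k = m then k else 0 := by
    intro k
    unfold CycleCfg
    split_ifs <;> simp_all
  simp [hterm, Finset.sum_sub_distrib]

/-- Minimum principle: on the set where `W` attains a negative minimum, the only vertex allowed a
positive Laplacian is `m`, and it would have to be both the left and the right end of that set. -/
lemma nonneg_of_cycleLaplacian_le_one_sub_cycleCfg {W : ZMod n → ℤ} {m : ZMod n} (hW0 : W 0 = 0)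
    (hW : ∀ i ≠ 0, cycleLaplacian n W i ≤ 1 - CycleCfg n m i) (i : ZMod n) : 0 ≤ W i := by
  by_contra! hneg
  obtain ⟨a, ha⟩ := Finite.exists_min W
  set S : Set (ZMod n) := {x | W x = W a}
  have h0 : (0 : ZMod n) ∉ S := fun h => by linarith [ha i, show W 0 = W a from h]
  have hlap : ∀ x ∈ S, W (x + 1) - W a + (W (x - 1) - W a) ≤ 1 - CycleCfg n m x := by
    intro x hx
    have := hW x (ne_of_mem_of_not_mem hx h0)
    rw [cycleLaplacian_apply, show W x = W a from hx] at this
    linarith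
  have hend : ∀ x ∈ S, (x + 1 ∉ S ∨ x - 1 ∉ S) → x = m := by
    intro x hx hout
    by_contra hxm
    have hcfg : CycleCfg n m x = 1 := by simp [CycleCfg, ne_of_mem_of_not_mem hx h0, hxm]
    have := hlap x hx
    have := ha (x + 1)
    have := ha (x - 1)
    rcases hout with hout | hout
    · exact hout (by change W (x + 1) = W a; omega)
    · exact hout (by change W (x - 1) = W a; omega)
  obtain ⟨x, hx, hx1⟩ := ZMod.exists_mem_add_one_not_mem (show a ∈ S from rfl) h0
  obtain ⟨y, hy, hy1⟩ := ZMod.exists_mem_sub_one_not_mem (show a ∈ S from rfl) h0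
  have hyx : y = x := (hend y hy (.inr hy1)).trans (hend x hx (.inl hx1)).symm
  rw [hyx] at hy1
  have hx1 : W (x + 1) ≠ W a := hx1
  have hy1 : W (x - 1) ≠ W a := hy1
  have := hlap x hx
  have := ha (x + 1)
  have := ha (x - 1)
  omega

lemma exists_cycleToppleVal_eq_cycleCfg (j : ZMod n) (η : ZMod n → ℕ) :
    ∃ u : ZMod n → ℕ, u 0 = 0 ∧ ∀ i ≠ 0,
      (CycleCfg n (j - ∑ k, (η k : ZMod n) * k) i : ℤ) =
        CycleToppleVal n (fun i => CycleCfg n j i + η i) u i := by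
  set m := j - ∑ k, (η k : ZMod n) * k
  obtain ⟨u, hu0, hu⟩ : (fun i => (CycleCfg n m i : ℤ) - (CycleCfg n j i + η i)) ∈
      cycleLaplacianLattice n := by
    refine mem_cycleLaplacianLattice_of_sum_mul_eq_zero ?_
    push_cast
    simp only [sub_mul, add_mul, Finset.sum_sub_distrib, Finset.sum_add_distrib,
      sum_cycleCfg_mul, m]
    ring
  have hu_nonneg : ∀ i, 0 ≤ u i := nonneg_of_cycleLaplacian_le_one_sub_cycleCfg (m := j) hu0
    fun i hi => by linarith [hu i hi, cycleCfg_le_one n m i, (η i).zero_le]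
  have hu_toNat : (fun i => ((u i).toNat : ℤ)) = u :=
    funext fun i => Int.toNat_of_nonneg (hu_nonneg i)
  refine ⟨fun i => (u i).toNat, by simp [hu0], fun i hi => ?_⟩
  rw [cycleToppleVal_eq, hu_toNat, ← hu i hi]
  push_cast
  ring

end Recurrent

theorem cycle_add_config_stabilize_general (n : ℕ) [NeZero n] (j : ZMod n)
    (η : ZMod n → ℕ) :
    CycleIsStabilization n (fun i => CycleCfg n j i + η i)
      (CycleCfg n (j - ∑ k : ZMod n, (η k : ZMod n) * k)) := by
  obtain ⟨u, hu0, hu⟩ := exists_cycleToppleVal_eq_cycleCfg j η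
  refine ⟨u, hu0, by simp [CycleCfg], hu, fun i _ => cycleCfg_le_one n _ i,
    fun u' hu'0 hu' i => ?_⟩
  -- firing `u' - u` turns `c_m` into a configuration with at most one chip per vertex
  have := nonneg_of_cycleLaplacian_le_one_sub_cycleCfg (W := fun x => (u' x : ℤ) - u x)
    (m := j - ∑ k : ZMod n, (η k : ZMod n) * k) (by simp [hu0, hu'0]) (fun x hx => ?_) i
  · omega
  · have h1 := hu x hx
    have h2 := (hu' x hx).2
    rw [cycleToppleVal_eq, cycleLaplacian_apply] at h1 h2
    rw [cycleLaplacian_apply]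
    linarith

/-- Adding a configuration `η` to the recurrent configuration `c_j` on a cycle
of length `n` and stabilizing yields `c_m` with
`m ≡ j - ∑_{k=1}^{n-1} η(v_k)·k (mod n)`. -/
theorem cycle_add_config_stabilize (n : ℕ) [NeZero n] (j : ZMod n)
    (η : ZMod n → ℕ) (hη : η 0 = 0) :
    CycleIsStabilization n (fun i => CycleCfg n j i + η i)
      (CycleCfg n (j - ∑ k : ZMod n, (η k : ZMod n) * k)) :=
  cycle_add_config_stabilize_general n j η
end

section
/- Let C be a cycle of length n with dissipative vertex p, other vertices v_1,...,v_{n-1} numbered counterclockwise, and let 1 ≤ k ≤ n−1, t ≥ 1. Then the stabilization of c_j + t·δ_{v_k} (adding t chips at v_k to recurrent configuration c_j) equals c_m with m ≡ j − t·k (mod n). -/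
namespace CycleSandpile

variable {n : ℕ}

def topple (c : ZMod n → ℤ) (u : ZMod n → ℕ) : ZMod n → ℤ :=
  fun i => c i + u (i + 1) + u (i - 1) - 2 * u i

theorem cycleToppleVal_eq_topple (c u : ZMod n → ℕ) (i : ZMod n) :
    CycleToppleVal n c u i = topple (fun x => (c x : ℤ)) u i :=
  rfl

theorem topple_zero (c : ZMod n → ℤ) : topple c 0 = c := by
  funext i
  simp [topple]

theorem topple_add (c : ZMod n → ℤ) (u w : ZMod n → ℕ) :
    topple c (u + w) = topple (topple c u) w := by
  funext i
  simp only [topple, Pi.add_apply, Nat.cast_add]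
  ring

theorem topple_add_config (c e : ZMod n → ℤ) (u : ZMod n → ℕ) :
    topple (c + e) u = topple c u + e := by
  funext i
  simp only [topple, Pi.add_apply]
  ring

theorem topple_add_single (c : ZMod n → ℤ) (u : ZMod n → ℕ) (v : ZMod n) :
    topple c (u + Pi.single v 1) =
      topple c u + Pi.single (v - 1) 1 - 2 • Pi.single v 1 + Pi.single (v + 1) 1 := by
  funext i
  simp only [topple, Pi.add_apply, Pi.sub_apply, Pi.smul_apply, Pi.single_apply,
    Nat.cast_add, ← eq_sub_iff_add_eq, sub_eq_iff_eq_add]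
  push_cast
  ring

inductive IsLegal (c : ZMod n → ℤ) : (ZMod n → ℕ) → Prop
  | zero : IsLegal c 0
  | fire {u : ZMod n → ℕ} {v : ZMod n} :
      IsLegal c u → v ≠ 0 → 2 ≤ topple c u v → IsLegal c (u + Pi.single v 1)

namespace IsLegal

variable {c c' : ZMod n → ℤ} {u w : ZMod n → ℕ}

theorem single {v : ZMod n} (hv : v ≠ 0) (h : 2 ≤ c v) : IsLegal c (Pi.single v 1) := by
  simpa using zero.fire hv (by rwa [topple_zero])

theorem apply_zero (hu : IsLegal c u) : u 0 = 0 := by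
  induction hu with
  | zero => rfl
  | fire _ hv _ ih => simp [ih, Pi.single_eq_of_ne' hv]

theorem mono (hcc : ∀ i ≠ 0, c i ≤ c' i) (hu : IsLegal c u) : IsLegal c' u := by
  induction hu with
  | zero => exact zero
  | fire _ hv h ih =>
    refine ih.fire hv (le_trans h ?_)
    simp only [topple]
    linarith [hcc _ hv]

theorem add (hu : IsLegal c u) (hw : IsLegal (topple c u) w) : IsLegal c (u + w) := by
  induction hw with
  | zero => simpa using hu
  | fire _ hv h ih =>
    rw [← add_assoc]
    exact ih.fire hv (by rwa [topple_add])

/-- Least action principle. -/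
theorem le_of_stable (hu : IsLegal c u) {u' : ZMod n → ℕ} (hu' : ∀ i ≠ 0, topple c u' i ≤ 1) :
    u ≤ u' := by
  induction hu with
  | zero => exact fun _ => Nat.zero_le _
  | @fire u v _ hv h ih =>
    have hlt : u v < u' v := by
      by_contra! hge
      have h0 : u v ≤ u' v := ih v
      have h1 : u (v + 1) ≤ u' (v + 1) := ih (v + 1)
      have h2 : u (v - 1) ≤ u' (v - 1) := ih (v - 1)
      have := hu' v hv
      simp only [topple] at h this
      omega
    intro i
    rcases eq_or_ne i v with rfl | hi
    · simpa using hlt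
    · simpa [Pi.single_eq_of_ne hi] using ih i

end IsLegal

theorem natCast_ne_natCast {x y : ℕ} (hx : x ≤ n) (hy : 0 < y) (hyn : y < n) (hxy : x ≠ y) :
    (y : ZMod n) ≠ x := by
  rw [Ne, ZMod.natCast_eq_natCast_iff', Nat.mod_eq_of_lt hyn]
  rcases hx.lt_or_eq with hx | rfl
  · rw [Nat.mod_eq_of_lt hx]
    omega
  · rw [Nat.mod_self]
    omega

theorem natCast_ne_zero_of_lt {x : ℕ} (hx : 0 < x) (hxn : x < n) : (x : ZMod n) ≠ 0 := by
  simpa using natCast_ne_natCast (Nat.zero_le n) hx hxn hx.ne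

theorem single_natCast_apply_of_ne {x y : ℕ} (hx : x ≤ n) (hy : 0 < y) (hyn : y < n)
    (hxy : x ≠ y) : (Pi.single (x : ZMod n) 1 : ZMod n → ℤ) y = 0 := by
  simp [natCast_ne_natCast hx hy hyn hxy]

theorem single_one_apply_nonneg (x y : ZMod n) : 0 ≤ (Pi.single x 1 : ZMod n → ℤ) y := by
  rw [Pi.single_apply]
  split_ifs <;> norm_num

theorem topple_add_single_natCast (c : ZMod n → ℤ) (u : ZMod n → ℕ) {v : ℕ} (hv : 0 < v) :
    topple c (u + Pi.single (v : ZMod n) 1) = topple c u + Pi.single ((v - 1 : ℕ) : ZMod n) 1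
      - 2 • Pi.single (v : ZMod n) 1 + Pi.single ((v + 1 : ℕ) : ZMod n) 1 := by
  rw [topple_add_single, Nat.cast_pred hv, Nat.cast_succ]

/-- The effect on a configuration of firing every vertex of the arc `(a, s]` once. -/
def arcChange (a s : ℕ) : ZMod n → ℤ :=
  Pi.single (a : ZMod n) 1 - Pi.single ((a + 1 : ℕ) : ZMod n) 1 - Pi.single (s : ZMod n) 1
    + Pi.single ((s + 1 : ℕ) : ZMod n) 1

def CanFireArc (d : ZMod n → ℤ) (a s : ℕ) : Prop :=
  ∃ u, IsLegal d u ∧ topple d u = d + arcChange a s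

theorem canFireArc_succ {d : ZMod n → ℤ} {a : ℕ} (hn : a + 1 < n) (h : 2 ≤ d (a + 1 : ℕ)) :
    CanFireArc d a (a + 1) := by
  refine ⟨_, IsLegal.single (natCast_ne_zero_of_lt (by omega) hn) h, ?_⟩
  rw [← zero_add (Pi.single _ _), topple_add_single_natCast _ _ (by omega), topple_zero,
    Nat.add_sub_cancel, arcChange]
  abel

theorem CanFireArc.succ_right {d : ZMod n → ℤ} {a s : ℕ} (h : CanFireArc d a s) (has : a < s)
    (hsn : s + 1 < n) (h1 : 1 ≤ d (s + 1 : ℕ)) : CanFireArc d a (s + 1) := by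
  obtain ⟨u, hu, hdu⟩ := h
  have hfire : 2 ≤ topple d u ((s + 1 : ℕ) : ZMod n) := by
    simp only [hdu, arcChange, Pi.add_apply, Pi.sub_apply, Pi.single_eq_same]
    rw [single_natCast_apply_of_ne (x := a + 1) (by omega) (by omega) hsn (by omega),
      single_natCast_apply_of_ne (x := s) (by omega) (by omega) hsn (by omega)]
    linarith [single_one_apply_nonneg (a : ZMod n) ((s + 1 : ℕ) : ZMod n)]
  refine ⟨_, hu.fire (natCast_ne_zero_of_lt (by omega) hsn) hfire, ?_⟩
  rw [topple_add_single_natCast _ _ (by omega), hdu, Nat.add_sub_cancel, arcChange, arcChange]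
  abel

theorem CanFireArc.pred_left {d : ZMod n → ℤ} {a s : ℕ} (h : CanFireArc d (a + 1) s)
    (has : a + 1 < s) (hsn : s < n) (h1 : 1 ≤ d (a + 1 : ℕ)) : CanFireArc d a s := by
  obtain ⟨u, hu, hdu⟩ := h
  have hfire : 2 ≤ topple d u ((a + 1 : ℕ) : ZMod n) := by
    simp only [hdu, arcChange, Pi.add_apply, Pi.sub_apply, Pi.single_eq_same]
    rw [single_natCast_apply_of_ne (x := a + 1 + 1) (by omega) (by omega) (by omega) (by omega),
      single_natCast_apply_of_ne (x := s) (by omega) (by omega) (by omega) (by omega)]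
    linarith [single_one_apply_nonneg ((s + 1 : ℕ) : ZMod n) ((a + 1 : ℕ) : ZMod n)]
  refine ⟨_, hu.fire (natCast_ne_zero_of_lt (by omega) (by omega)) hfire, ?_⟩
  rw [topple_add_single_natCast _ _ (by omega), hdu, Nat.add_sub_cancel, arcChange, arcChange]
  abel

theorem canFireArc {a m s : ℕ} (ham : a < m) (hms : m ≤ s) (hsn : s < n)
    {d : ZMod n → ℤ} (hm : 2 ≤ d m) (hd : ∀ i : ℕ, a < i → i ≤ s → 1 ≤ d i) :
    CanFireArc d a s := by
  obtain ⟨w, rfl⟩ : ∃ w, s = a + 1 + w := ⟨s - a - 1, by omega⟩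
  induction w generalizing a with
  | zero =>
    obtain rfl : m = a + 1 := by omega
    exact canFireArc_succ hsn hm
  | succ w ih =>
    simp only [← Nat.add_assoc] at hsn hd hms ⊢
    rcases (show m ≤ a + 1 + w ∨ m = a + 1 + w + 1 by omega) with hm' | rfl
    · exact (ih ham hm' (by omega) fun i h1 h2 => hd i h1 (by omega)).succ_right (by omega) hsn
        (hd _ (by omega) le_rfl)
    · have h := ih (a := a + 1) (by omega) (by omega) (by omega)
        fun i h1 h2 => hd i (by omega) (by omega)
      rw [show a + 1 + 1 + w = a + 1 + w + 1 by omega] at h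
      exact h.pred_left (by omega) hsn (hd _ (by omega) (by omega))

/-- Firing the nested arcs `(a, s] ⊃ (a + 1, s - 1] ⊃ ⋯` that contain `k`. -/
theorem exists_isLegal_tent {a k s : ℕ} (hak : a < k) (hks : k ≤ s) (hsn : s < n)
    {d : ZMod n → ℤ} (hk : 2 ≤ d k) (hd : ∀ i : ℕ, a < i → i ≤ s → 1 ≤ d i) :
    ∃ u, IsLegal d u ∧ topple d u = d + Pi.single (a : ZMod n) 1 - Pi.single (k : ZMod n) 1
      - Pi.single ((a + s + 1 - k : ℕ) : ZMod n) 1 + Pi.single ((s + 1 : ℕ) : ZMod n) 1 := by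
  induction s generalizing a d with
  | zero => omega
  | succ s ih =>
    obtain ⟨u, hu, hdu⟩ := canFireArc hak hks hsn hk hd
    rw [arcChange] at hdu
    rcases (show k = a + 1 ∨ k = s + 1 ∨ (a + 1 < k ∧ k ≤ s) by omega)
      with rfl | rfl | ⟨hak', hks'⟩
    · refine ⟨u, hu, ?_⟩
      rw [hdu, show a + (s + 1) + 1 - (a + 1) = s + 1 by omega]
      abel
    · refine ⟨u, hu, ?_⟩
      rw [hdu, show a + (s + 1) + 1 - (s + 1) = a + 1 by omega]
      abel
    · have hle : ∀ i : ℕ, a + 1 < i → i ≤ s → d i ≤ topple d u i := by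
        intro i h1 h2
        rw [hdu]
        simp only [Pi.add_apply, Pi.sub_apply]
        rw [single_natCast_apply_of_ne (x := a + 1) (by omega) (by omega) (by omega) (by omega),
          single_natCast_apply_of_ne (x := s + 1) (by omega) (by omega) (by omega) (by omega)]
        linarith [single_one_apply_nonneg (a : ZMod n) i,
          single_one_apply_nonneg ((s + 1 + 1 : ℕ) : ZMod n) i]
      obtain ⟨u', hu', hdu'⟩ := ih hak' hks' (by omega) (hk.trans (hle k hak' hks'))
        fun i h1 h2 => (hd i (by omega) (by omega)).trans (hle i h1 h2)
      refine ⟨u + u', hu.add hu', ?_⟩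
      rw [topple_add, hdu', hdu, show a + 1 + s + 1 - k = a + (s + 1) + 1 - k by omega]
      abel

theorem cycleCfg_add_single_sub_single (j k : ZMod n) (hk : k ≠ 0) {x : ZMod n} (hx : x ≠ 0) :
    (CycleCfg n j x : ℤ) + (Pi.single j 1 : ZMod n → ℤ) x - (Pi.single (j - k) 1 : ZMod n → ℤ) x =
      CycleCfg n (j - k) x := by
  have hjk : j - k ≠ j := by simpa using hk
  simp only [CycleCfg, Pi.single_apply, if_neg hx]
  split_ifs <;> simp_all

/-- The arc `(a, s + 1)` of the cycle that contains `k` and whose endpoints are the sink `0` and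
the empty vertex `j` of `c_j`. -/
theorem exists_arc_of_ne [NeZero n] {j k : ZMod n} (hk : k ≠ 0) (hjk : j ≠ k) :
    ∃ a s : ℕ, a < k.val ∧ k.val ≤ s ∧ s < n ∧
      (∀ i : ℕ, a < i → i ≤ s → (i : ZMod n) ≠ j) ∧
      (∀ x ≠ 0, (Pi.single (a : ZMod n) 1 : ZMod n → ℤ) x
        + (Pi.single ((s + 1 : ℕ) : ZMod n) 1 : ZMod n → ℤ) x
        = (Pi.single j 1 : ZMod n → ℤ) x) ∧
      ((a + s + 1 - k.val : ℕ) : ZMod n) = j - k := by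
  have hkv : ((k.val : ℕ) : ZMod n) = k := ZMod.natCast_zmod_val k
  have hjv : ((j.val : ℕ) : ZMod n) = j := ZMod.natCast_zmod_val j
  have hjkv : j.val ≠ k.val := fun h => hjk (ZMod.val_injective n h)
  have hk_lt := ZMod.val_lt k
  have hj_lt := ZMod.val_lt j
  have hn := NeZero.pos n
  have hne_j : ∀ i : ℕ, 0 < i → i < n → i ≠ j.val → (i : ZMod n) ≠ j := fun i h1 h2 h =>
    hjv ▸ natCast_ne_natCast hj_lt.le h1 h2 h.symm
  rcases lt_or_gt_of_ne hjkv with hlt | hlt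
  · refine ⟨j.val, n - 1, hlt, by omega, by omega,
      fun i h1 h2 => hne_j i (by omega) (by omega) (by omega), fun x hx => ?_, ?_⟩
    · rw [Nat.sub_add_cancel hn, ZMod.natCast_self, hjv]
      simp [Pi.single_apply, hx]
    · rw [Nat.cast_sub (by omega)]
      push_cast [Nat.cast_sub hn]
      rw [hjv, hkv, ZMod.natCast_self]
      ring
  · have hkv0 : 0 < k.val := Nat.pos_of_ne_zero ((ZMod.val_ne_zero k).2 hk)
    refine ⟨0, j.val - 1, hkv0, by omega, by omega,
      fun i h1 h2 => hne_j i h1 (by omega) (by omega), fun x hx => ?_, ?_⟩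
    · rw [Nat.sub_add_cancel (by omega), hjv]
      simp [Pi.single_apply, hx]
    · rw [show 0 + (j.val - 1) + 1 - k.val = j.val - k.val by omega, Nat.cast_sub hlt.le,
        hjv, hkv]

theorem exists_isLegal_add_chip [NeZero n] {j k : ZMod n} (hk : k ≠ 0) {d : ZMod n → ℤ}
    (hd : ∀ x ≠ 0, d x = CycleCfg n j x + (Pi.single k 1 : ZMod n → ℤ) x) :
    ∃ u, IsLegal d u ∧ ∀ x ≠ 0, topple d u x = CycleCfg n (j - k) x := by
  rcases eq_or_ne j k with rfl | hjk
  · refine ⟨0, IsLegal.zero, fun x hx => ?_⟩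
    rw [topple_zero, hd x hx]
    simp only [CycleCfg, Pi.single_apply, sub_self, if_neg hx]
    split_ifs <;> simp
  obtain ⟨a, s, hak, hks, hsn, hsj, hends, hpos⟩ := exists_arc_of_ne hk hjk
  have hkv : ((k.val : ℕ) : ZMod n) = k := ZMod.natCast_zmod_val k
  have hval : ∀ i : ℕ, a < i → i ≤ s → d i = 1 + (Pi.single k 1 : ZMod n → ℤ) i := by
    intro i h1 h2
    have hi0 : (i : ZMod n) ≠ 0 := natCast_ne_zero_of_lt (by omega) (by omega)
    simp [hd _ hi0, CycleCfg, hi0, hsj i h1 h2]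
  obtain ⟨u, hu, hdu⟩ := exists_isLegal_tent hak hks hsn (d := d)
    (by rw [hval _ hak hks, hkv, Pi.single_eq_same]; norm_num)
    fun i h1 h2 => by rw [hval i h1 h2]; linarith [single_one_apply_nonneg k (i : ZMod n)]
  refine ⟨u, hu, fun x hx => ?_⟩
  rw [hdu, hpos, hkv]
  simp only [Pi.add_apply, Pi.sub_apply]
  rw [hd x hx, ← cycleCfg_add_single_sub_single j k hk hx, ← hends x hx]
  ring

theorem exists_isLegal_add_chips [NeZero n] {j k : ZMod n} (hk : k ≠ 0) (t : ℕ)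
    {d : ZMod n → ℤ} (hd : ∀ x ≠ 0, d x = CycleCfg n j x + (Pi.single k t : ZMod n → ℤ) x) :
    ∃ u, IsLegal d u ∧ ∀ x ≠ 0, topple d u x = CycleCfg n (j - t * k) x := by
  induction t generalizing d with
  | zero => exact ⟨0, IsLegal.zero, fun x hx => by simp [topple_zero, hd x hx]⟩
  | succ t ih =>
    obtain ⟨u, hu, hdu⟩ := ih (d := d - Pi.single k 1) fun x hx => by
      simp only [Pi.sub_apply, hd x hx, Pi.single_apply]
      split_ifs <;> push_cast <;> ring
    have hdu' : ∀ x ≠ 0,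
        topple d u x = CycleCfg n (j - t * k) x + (Pi.single k 1 : ZMod n → ℤ) x := by
      intro x hx
      rw [← sub_add_cancel d (Pi.single k 1), topple_add_config, Pi.add_apply, hdu x hx]
    obtain ⟨u', hu', hdu''⟩ := exists_isLegal_add_chip hk hdu'
    refine ⟨u + u', hu.mono (fun i _ => by simp [single_one_apply_nonneg]) |>.add hu', ?_⟩
    intro x hx
    rw [topple_add, hdu'' x hx]
    push_cast
    ring_nf

end CycleSandpile

theorem cycle_add_chips_stabilize_general (n : ℕ) [NeZero n] (j k : ZMod n)
    (hk : k ≠ 0) (t : ℕ) :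
    CycleIsStabilization n (fun i => CycleCfg n j i + if i = k then t else 0)
      (CycleCfg n (j - (t : ZMod n) * k)) := by
  obtain ⟨u, hu, hσ⟩ := CycleSandpile.exists_isLegal_add_chips (j := j) hk t
    (d := fun i => ((CycleCfg n j i + if i = k then t else 0 : ℕ) : ℤ))
    fun x _ => by simp [Pi.single_apply]
  simp only [CycleIsStabilization, CycleSandpile.cycleToppleVal_eq_topple]
  refine ⟨u, hu.apply_zero, by simp [CycleCfg], fun i hi => (hσ i hi).symm,
    fun i _ => ?_, fun u' _ hu' => hu.le_of_stable fun i hi => (hu' i hi).2⟩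
  unfold CycleCfg
  split_ifs <;> omega

/-- Adding `t ≥ 1` chips at the vertex `v_k` (`1 ≤ k ≤ n-1`, i.e. `k ≠ 0`) to
the recurrent configuration `c_j` on the cycle of length `n` and stabilizing
yields `c_m` with `m ≡ j - t·k (mod n)`. -/
theorem cycle_add_chips_stabilize (n : ℕ) [NeZero n] (j k : ZMod n)
    (hk : k ≠ 0) (t : ℕ) (ht : 1 ≤ t) :
    CycleIsStabilization n (fun i => CycleCfg n j i + if i = k then t else 0)
      (CycleCfg n (j - (t : ZMod n) * k)) :=
  cycle_add_chips_stabilize_general n j k hk t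
end

section
/- On the cycle C of length n with dissipative vertex p and non-dissipative vertices v_1,...,v_{n-1}, fix a vertex v_{i_0} with 2·i_0 ≤ n. Under the uniform measure μ on the n recurrent configurations, the probability that adding one chip at v_{i_0} triggers an avalanche of mass M (number of distinct vertices fired) equals: 0 if 0 < M < i_0; 1/n if i_0 ≤ M ≤ n−1−i_0; 2/n if n−i_0 ≤ M < n−1; and 1/n for M = 0 and M = n−1. -/
/-- Stable configuration on the cycle of length `n` with dissipative vertex `0`. -/
def CycleStable (n : ℕ) (c : ZMod n → ℕ) : Prop :=
  c 0 = 0 ∧ ∀ i : ZMod n, i ≠ 0 → c i ≤ 1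

/-- Dhar's burning criterion for recurrence on the cycle. -/
def CycleRecurrent (n : ℕ) (c : ZMod n → ℕ) : Prop :=
  ∃ ord : ZMod n → ℕ, Function.Injective ord ∧ ord 0 = 0 ∧
    ∀ i : ZMod n, i ≠ 0 →
      2 ≤ c i + ((if ord (i + 1) < ord i then 1 else 0) +
                 (if ord (i - 1) < ord i then 1 else 0))

/-- `u` is the odometer of the stabilization of `c` on the cycle of length `n`
with dissipative vertex `0` (least action principle). -/
def CycleIsOdometer (n : ℕ) (c u : ZMod n → ℕ) : Prop :=
  u 0 = 0 ∧
  (∀ i : ZMod n, i ≠ 0 →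
    0 ≤ CycleToppleVal n c u i ∧ CycleToppleVal n c u i ≤ 1) ∧
  (∀ u' : ZMod n → ℕ, u' 0 = 0 →
    (∀ i : ZMod n, i ≠ 0 →
      0 ≤ CycleToppleVal n c u' i ∧ CycleToppleVal n c u' i ≤ 1) →
    ∀ i, u i ≤ u' i)

/-- The avalanche triggered by adding one chip at `v` to the configuration `c`
has mass `M`: the odometer `u` of the stabilization of `c + δ_v` has exactly
`M` distinct fired vertices. -/
def CycleMassIs (n : ℕ) (c : ZMod n → ℕ) (v : ZMod n) (M : ℕ) : Prop :=
  ∃ u : ZMod n → ℕ,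
    CycleIsOdometer n (fun i => c i + if i = v then 1 else 0) u ∧
    M = {i : ZMod n | u i ≠ 0}.ncard

/-!
Recurrent configurations on the cycle are the all-ones configurations with at most one hole `k`:
by Dhar's criterion a second hole is impossible. Adding a chip at `i₀` either fills the hole
(mass `0`) or leaves exactly two empty sites `s < i₀ < L` around `i₀`, with `s, L ∈ {0, k, n}`.
The odometer is then the tent `min (v - s) (L - v) (i₀ - s) (L - i₀)`: it stabilizes, leaving
the single new hole `s + L - i₀`, and it is least by a discrete maximum principle: its difference
with any other stabilizing odometer is subharmonic, up to a defect of at most `1` at that new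
hole. So the mass is `L - s - 1`, and the distribution comes from counting the `n` holes `k` by
mass.
-/

section ZModIndex

variable {n : ℕ}

lemma ZMod.natCast_ne_zero_of_pos_of_lt {v : ℕ} (h0 : 0 < v) (hn : v < n) : (v : ZMod n) ≠ 0 := by
  rw [← ZMod.val_pos, ZMod.val_cast_of_lt hn]; exact h0

lemma ZMod.natCast_eq_iff_eq_val {v : ℕ} [NeZero n] (hv : v < n) (k : ZMod n) :
    (v : ZMod n) = k ↔ v = k.val :=
  ⟨fun h => by rw [← h, ZMod.val_cast_of_lt hv], fun h => by rw [h, ZMod.natCast_zmod_val]⟩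

lemma ZMod.forall_ne_zero_iff_natCast [NeZero n] {P : ZMod n → Prop} :
    (∀ i, i ≠ 0 → P i) ↔ ∀ v : ℕ, 0 < v → v < n → P v := by
  refine ⟨fun h v h0 hn => h _ (ZMod.natCast_ne_zero_of_pos_of_lt h0 hn), fun h i hi => ?_⟩
  simpa using h i.val (ZMod.val_pos.mpr hi) (ZMod.val_lt i)

lemma ZMod.val_natCast_of_le {w : ℕ} (h : w ≤ n) :
    (w : ZMod n).val = if w = n then 0 else w := by
  split_ifs with hw
  · simp [hw]
  · exact ZMod.val_cast_of_lt (by omega)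

lemma ZMod.ncard_setOf_val [NeZero n] (P : ℕ → Prop) [DecidablePred P] :
    {k : ZMod n | P k.val}.ncard = ((Finset.range n).filter P).card := by
  rw [← Set.ncard_image_of_injective _ (ZMod.val_injective n), ← Set.ncard_coe_finset]
  congr 1
  ext v
  simp only [Set.mem_image, Set.mem_ofPred_eq, Finset.coe_filter, Finset.mem_range]
  refine ⟨fun ⟨k, hk, hkv⟩ => hkv ▸ ⟨ZMod.val_lt k, hk⟩, fun ⟨hv, hP⟩ => ⟨v, ?_⟩⟩
  simpa [ZMod.val_cast_of_lt hv] using hP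

end ZModIndex

section Odometer

variable {n : ℕ}

lemma cycleToppleVal_natCast (c u : ZMod n → ℕ) {v : ℕ} (hv : 0 < v) :
    CycleToppleVal n c u v = (c v : ℤ) + u ↑(v + 1) + u ↑(v - 1) - 2 * u v := by
  simp [CycleToppleVal, Nat.cast_pred hv]

lemma cycleIsOdometer_zero {c : ZMod n → ℕ} (hc : ∀ i, i ≠ 0 → c i ≤ 1) :
    CycleIsOdometer n c 0 :=
  ⟨rfl, fun i hi => by simpa [CycleToppleVal] using hc i hi, fun _ _ _ _ => Nat.zero_le _⟩

lemma CycleIsOdometer.unique {c u u' : ZMod n → ℕ} (hu : CycleIsOdometer n c u)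
    (hu' : CycleIsOdometer n c u') : u = u' :=
  funext fun i => (hu.2.2 u' hu'.1 hu'.2.1 i).antisymm (hu'.2.2 u hu.1 hu.2.1 i)

lemma CycleMassIs.unique {c : ZMod n → ℕ} {v : ZMod n} {M M' : ℕ}
    (h : CycleMassIs n c v M) (h' : CycleMassIs n c v M') : M = M' := by
  obtain ⟨u, hu, rfl⟩ := h
  obtain ⟨u', hu', rfl⟩ := h'
  rw [hu.unique hu']

end Odometer

lemma le_zero_of_discrete_subharmonic_off {f : ℕ → ℤ} {N r : ℕ} (h0 : f 0 ≤ 0) (hN : f N ≤ 0)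
    (hsub : ∀ v, 0 < v → v < N → v ≠ r → 2 * f v ≤ f (v + 1) + f (v - 1))
    (hr : 2 * f r ≤ f (r + 1) + f (r - 1) + 1) {v : ℕ} (hv : v ≤ N) : f v ≤ 0 := by
  by_contra! hpos
  obtain ⟨x, hxN, hmax⟩ := (Finset.range (N + 1)).exists_max_image f ⟨v, by simp; omega⟩
  have hle : ∀ y ≤ N, f y ≤ f x := fun y hy => hmax y (by simp; omega)
  have hm : 0 < f x := hpos.trans_le (hle v hv)
  -- the least and the greatest maximizer each have a strictly smaller neighbour, which
  -- subharmonicity allows only at `r`; but then both neighbours of `r` are too small for `hr`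
  set S := (Finset.range (N + 1)).filter (f · = f x)
  have mem_S {y} : y ∈ S ↔ y ≤ N ∧ f y = f x := by simp [S]
  have hS : S.Nonempty := ⟨x, mem_S.mpr ⟨by simpa using hxN, rfl⟩⟩
  obtain ⟨hlN, hl⟩ := mem_S.mp (S.min'_mem hS)
  obtain ⟨hgN, hg⟩ := mem_S.mp (S.max'_mem hS)
  have hl0 : 0 < S.min' hS := Nat.pos_of_ne_zero fun h => by rw [h] at hl; omega
  have hg0 : 0 < S.max' hS := Nat.pos_of_ne_zero fun h => by rw [h] at hg; omega
  have hlN' : S.min' hS < N := lt_of_le_of_ne hlN fun h => by rw [h] at hl; omega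
  have hgN' : S.max' hS < N := lt_of_le_of_ne hgN fun h => by rw [h] at hg; omega
  have below_l : f (S.min' hS - 1) < f x := lt_of_le_of_ne (hle _ (by omega)) fun h =>
    absurd (S.min'_le _ (mem_S.mpr ⟨by omega, h⟩)) (by omega)
  have below_g : f (S.max' hS + 1) < f x := lt_of_le_of_ne (hle _ (by omega)) fun h =>
    absurd (S.le_max' _ (mem_S.mpr ⟨by omega, h⟩)) (by omega)
  have hlr : S.min' hS = r := by
    by_contra hne
    have := hsub _ hl0 hlN' hne
    have := hle (S.min' hS + 1) (by omega)
    omega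
  have hgr : S.max' hS = r := by
    by_contra hne
    have := hsub _ hg0 hgN' hne
    have := hle (S.max' hS - 1) (by omega)
    omega
  rw [hlr] at below_l hl
  rw [hgr] at below_g
  omega

def tent (s i₀ L v : ℕ) : ℕ := min (min (v - s) (L - v)) (min (i₀ - s) (L - i₀))

lemma tent_laplacian {s i₀ L v : ℕ} (hs : s < i₀) (hL : i₀ < L) (hv : 0 < v) :
    ((if v = s ∨ v = L then 0 else 1) + (if v = i₀ then 1 else 0) : ℤ)
      + tent s i₀ L (v + 1) + tent s i₀ L (v - 1) - 2 * tent s i₀ L v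
      = if v = s + L - i₀ then 0 else 1 := by
  have spec (w : ℕ) : (tent s i₀ L w = w - s ∨ tent s i₀ L w = L - w ∨
      tent s i₀ L w = i₀ - s ∨ tent s i₀ L w = L - i₀) ∧ tent s i₀ L w ≤ w - s ∧
      tent s i₀ L w ≤ L - w ∧ tent s i₀ L w ≤ i₀ - s ∧ tent s i₀ L w ≤ L - i₀ := by
    unfold tent; omega
  have hnext := spec (v + 1)
  have hprev := spec (v - 1)
  have hself := spec v
  generalize tent s i₀ L (v + 1) = a at hnext
  generalize tent s i₀ L (v - 1) = b at hprev
  generalize tent s i₀ L v = c at hself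
  split_ifs <;> omega

lemma tent_natCast_val {s i₀ L n w : ℕ} (hLn : L ≤ n) (hw : w ≤ n) :
    tent s i₀ L (w : ZMod n).val = tent s i₀ L w := by
  rw [ZMod.val_natCast_of_le hw]
  split_ifs with h
  · simp only [tent]; omega
  · rfl

section Tent

variable {n s i₀ L : ℕ} {c : ZMod n → ℕ}

lemma cycleToppleVal_tent (hs : s < i₀) (hL : i₀ < L) (hLn : L ≤ n)
    (hc : ∀ v : ℕ, 0 < v → v < n →
      c v = (if v = s ∨ v = L then 0 else 1) + if v = i₀ then 1 else 0)
    {v : ℕ} (hv : 0 < v) (hvn : v < n) :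
    CycleToppleVal n c (fun i => tent s i₀ L i.val) v = if v = s + L - i₀ then 0 else 1 := by
  rw [cycleToppleVal_natCast _ _ hv, tent_natCast_val hLn (by omega),
    tent_natCast_val hLn (by omega), tent_natCast_val hLn hvn.le, hc v hv hvn,
    ← tent_laplacian hs hL hv]
  push_cast
  ring

variable [NeZero n]

lemma tent_le_of_cycleToppleVal_le_one (hs : s < i₀) (hL : i₀ < L) (hLn : L ≤ n)
    (hc : ∀ v : ℕ, 0 < v → v < n →
      c v = (if v = s ∨ v = L then 0 else 1) + if v = i₀ then 1 else 0)
    {u : ZMod n → ℕ} (hu0 : u 0 = 0) (hu : ∀ i : ZMod n, i ≠ 0 → CycleToppleVal n c u i ≤ 1)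
    (i : ZMod n) : tent s i₀ L i.val ≤ u i := by
  -- the difference of the two odometers is subharmonic, except for a defect of at most `1`
  -- at the new hole `s + L - i₀`
  set d : ℕ → ℤ := fun v => tent s i₀ L v - u v
  have hlap : ∀ v : ℕ, 0 < v → v < n → d (v + 1) + d (v - 1) - 2 * d v
      = (if v = s + L - i₀ then 0 else 1) - CycleToppleVal n c u v := by
    intro v hv hvn
    rw [← cycleToppleVal_tent hs hL hLn hc hv hvn, cycleToppleVal_natCast _ _ hv,
      cycleToppleVal_natCast _ _ hv, tent_natCast_val hLn (by omega),
      tent_natCast_val hLn (by omega), tent_natCast_val hLn hvn.le]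
    ring
  have hu' := ZMod.forall_ne_zero_iff_natCast.mp hu
  have hd : d i.val ≤ 0 := by
    refine le_zero_of_discrete_subharmonic_off (N := n) (r := s + L - i₀) ?_ ?_ ?_ ?_
      (ZMod.val_lt i).le
    · simp [d, tent, hu0]
    · simp [d, tent, hu0, Nat.sub_eq_zero_of_le hLn]
    · intro v hv hvn hvr
      have := hlap v hv hvn
      have := hu' v hv hvn
      rw [if_neg hvr] at *
      linarith
    · have := hlap (s + L - i₀) (by omega) (by omega)
      have := hu' (s + L - i₀) (by omega) (by omega)
      rw [if_pos rfl] at *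
      linarith
  simpa [d] using hd

lemma cycleIsOdometer_tent (hs : s < i₀) (hL : i₀ < L) (hLn : L ≤ n)
    (hc : ∀ v : ℕ, 0 < v → v < n →
      c v = (if v = s ∨ v = L then 0 else 1) + if v = i₀ then 1 else 0) :
    CycleIsOdometer n c (fun i => tent s i₀ L i.val) := by
  refine ⟨by simp [tent], ZMod.forall_ne_zero_iff_natCast.mpr fun v hv hvn => ?_,
    fun u hu0 hu => tent_le_of_cycleToppleVal_le_one hs hL hLn hc hu0 fun i hi => (hu i hi).2⟩
  rw [cycleToppleVal_tent hs hL hLn hc hv hvn]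
  split_ifs <;> norm_num

lemma ncard_tent_ne_zero (hs : s < i₀) (hL : i₀ < L) (hLn : L ≤ n) :
    {i : ZMod n | tent s i₀ L i.val ≠ 0}.ncard = L - s - 1 := by
  rw [ZMod.ncard_setOf_val (tent s i₀ L · ≠ 0), ← Nat.card_Ioo]
  congr 1
  ext v
  simp only [Finset.mem_filter, Finset.mem_range, Finset.mem_Ioo, tent, ne_eq, min_eq_zero, not_or]
  omega

lemma cycleMassIs_tent (hs : s < i₀) (hL : i₀ < L) (hLn : L ≤ n)
    (hc : ∀ v : ℕ, 0 < v → v < n →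
      c v + (if (v : ZMod n) = i₀ then 1 else 0) =
        (if v = s ∨ v = L then 0 else 1) + if v = i₀ then 1 else 0) :
    CycleMassIs n c i₀ (L - s - 1) :=
  ⟨_, cycleIsOdometer_tent hs hL hLn hc, (ncard_tent_ne_zero hs hL hLn).symm⟩

end Tent

def cycleHoleConfig (n : ℕ) (k : ZMod n) : ZMod n → ℕ := fun i => if i = 0 ∨ i = k then 0 else 1

/-- Burning time of vertex `w` for the configuration with a hole at `b` (no hole if `b = 0`):
the fire runs up from the sink to `b - 1`, then down from the sink to `b + 1`, and reaches `b`
last. -/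
def burnTime (n b w : ℕ) : ℕ := if w < b ∨ b = 0 then w else if w = b then n else b + n - w

section HoleConfig

variable {n : ℕ}

lemma cycleHoleConfig_natCast [NeZero n] (k : ZMod n) {v : ℕ} (h0 : 0 < v) (hn : v < n) :
    cycleHoleConfig n k v = if v = k.val then 0 else 1 := by
  simp [cycleHoleConfig, ZMod.natCast_ne_zero_of_pos_of_lt h0 hn, ZMod.natCast_eq_iff_eq_val hn]

lemma cycleHoleConfig_injective : Function.Injective (cycleHoleConfig n) := by
  intro k k' h
  have hk := congrFun h k
  have hk' := congrFun h k'
  simp only [cycleHoleConfig] at hk hk'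
  split_ifs at hk hk' <;> grind

lemma cycleStable_cycleHoleConfig (k : ZMod n) : CycleStable n (cycleHoleConfig n k) :=
  ⟨by simp [cycleHoleConfig], fun i _ => by unfold cycleHoleConfig; split_ifs <;> omega⟩

lemma cycleRecurrent_cycleHoleConfig [NeZero n] (k : ZMod n) :
    CycleRecurrent n (cycleHoleConfig n k) := by
  have hk := ZMod.val_lt k
  refine ⟨fun i => burnTime n k.val i.val, fun x y hxy => ZMod.val_injective n ?_, by
    simp [burnTime], ZMod.forall_ne_zero_iff_natCast.mpr fun v hv hvn => ?_⟩
  · have := ZMod.val_lt x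
    have := ZMod.val_lt y
    generalize k.val = b at *
    simp only [burnTime] at hxy
    split_ifs at hxy <;> omega
  · beta_reduce
    rw [← Nat.cast_add_one, ← Nat.cast_pred hv, cycleHoleConfig_natCast k hv hvn,
      ZMod.val_natCast_of_le (by omega), ZMod.val_cast_of_lt hvn, ZMod.val_cast_of_lt (by omega)]
    generalize k.val = b at *
    simp only [burnTime]
    split_ifs <;> omega

variable [NeZero n] {c : ZMod n → ℕ}

/-- Dhar's criterion forbids two holes: on the arc between them the vertex burnt first would
need a neighbour on the arc burnt even earlier. -/
lemma CycleRecurrent.false_of_holes (hst : CycleStable n c) (hrec : CycleRecurrent n c)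
    {a b : ℕ} (ha : 0 < a) (hab : a < b) (hb : b < n) (hca : c a = 0) (hcb : c b = 0) : False := by
  obtain ⟨ord, -, -, hord⟩ := hrec
  obtain ⟨x, hx, hmin⟩ := (Finset.Icc a b).exists_min_image (fun w : ℕ => ord w)
    ⟨a, by simp; omega⟩
  rw [Finset.mem_Icc] at hx
  have hburn := ZMod.forall_ne_zero_iff_natCast.mp hord x (by omega) (by omega)
  rw [← Nat.cast_add_one, ← Nat.cast_pred (by omega)] at hburn
  have hnext : x + 1 ≤ b → ord x ≤ ord ↑(x + 1) := fun h => hmin _ (by simp; omega)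
  have hprev : a ≤ x - 1 → ord x ≤ ord ↑(x - 1) := fun h => hmin _ (by simp; omega)
  have hcx := hst.2 x (ZMod.natCast_ne_zero_of_pos_of_lt (by omega) (by omega))
  rcases eq_or_ne x a with rfl | hxa
  · rw [hca] at hburn; split_ifs at hburn <;> omega
  rcases eq_or_ne x b with rfl | hxb
  · rw [hcb] at hburn; split_ifs at hburn <;> omega
  split_ifs at hburn <;> omega

lemma CycleRecurrent.eq_of_eq_zero (hst : CycleStable n c) (hrec : CycleRecurrent n c)
    {j₁ j₂ : ZMod n} (h₁ : j₁ ≠ 0) (h₂ : j₂ ≠ 0) (hc₁ : c j₁ = 0) (hc₂ : c j₂ = 0) :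
    j₁ = j₂ := by
  have key {j j' : ZMod n} (hj : j ≠ 0) (hc : c j = 0) (hc' : c j' = 0) (hlt : j.val < j'.val) :
      False :=
    hrec.false_of_holes hst (ZMod.val_pos.mpr hj) hlt (ZMod.val_lt j') (by simpa using hc)
      (by simpa using hc')
  rcases lt_trichotomy j₁.val j₂.val with h | h | h
  · exact (key h₁ hc₁ hc₂ h).elim
  · exact ZMod.val_injective n h
  · exact (key h₂ hc₂ hc₁ h).elim

lemma cycleStable_and_cycleRecurrent_iff :
    CycleStable n c ∧ CycleRecurrent n c ↔ ∃ k, cycleHoleConfig n k = c := by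
  refine ⟨fun ⟨hst, hrec⟩ => ?_, ?_⟩
  · obtain ⟨k, hck, hk⟩ : ∃ k, c k = 0 ∧ ∀ i, i ≠ 0 → c i = 0 → i = k := by
      by_cases hhole : ∃ j, j ≠ 0 ∧ c j = 0
      · obtain ⟨j, hj, hcj⟩ := hhole
        exact ⟨j, hcj, fun i hi hci => hrec.eq_of_eq_zero hst hi hj hci hcj⟩
      · push Not at hhole
        exact ⟨0, hst.1, fun i hi hci => absurd hci (hhole i hi)⟩
    refine ⟨k, funext fun i => ?_⟩
    unfold cycleHoleConfig
    split_ifs with h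
    · rcases h with rfl | rfl
      exacts [hst.1.symm, hck.symm]
    · push Not at h
      have := hst.2 i h.1
      have : c i ≠ 0 := fun hci => h.2 (hk i h.1 hci)
      omega
  · rintro ⟨k, rfl⟩
    exact ⟨cycleStable_cycleHoleConfig k, cycleRecurrent_cycleHoleConfig k⟩

end HoleConfig

/-- Mass of the avalanche triggered at `v_{i₀}` from the configuration with a hole at `a`
(`a = 0`: no hole). -/
def avalancheMass (n i₀ a : ℕ) : ℕ := if a = i₀ then 0 else if a < i₀ then n - 1 - a else a - 1

section Mass

variable {n i₀ : ℕ} [NeZero n]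

lemma cycleMassIs_cycleHoleConfig (h0 : 0 < i₀) (hn : i₀ < n) (k : ZMod n) :
    CycleMassIs n (cycleHoleConfig n k) i₀ (avalancheMass n i₀ k.val) := by
  have hk := ZMod.val_lt k
  have hchips : ∀ v : ℕ, 0 < v → v < n →
      cycleHoleConfig n k v + (if (v : ZMod n) = i₀ then 1 else 0) =
        (if v = k.val then 0 else 1) + if v = i₀ then 1 else 0 := fun v hv hvn => by
    simp only [cycleHoleConfig_natCast k hv hvn, ZMod.natCast_eq_iff_eq_val hvn,
      ZMod.val_cast_of_lt hn]
  unfold avalancheMass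
  split_ifs with hki hlt
  · -- the new chip fills the hole
    refine ⟨0, cycleIsOdometer_zero (ZMod.forall_ne_zero_iff_natCast.mpr fun v hv hvn => ?_),
      by simp⟩
    rw [hchips v hv hvn]
    split_ifs <;> omega
  · -- the empty sites around `i₀` are `k` and the sink, reached upwards as `n`
    convert cycleMassIs_tent (s := k.val) (L := n) hlt hn le_rfl fun v hv hvn => ?_ using 1
    · omega
    rw [hchips v hv hvn]
    split_ifs <;> omega
  · -- the empty sites around `i₀` are the sink and `k`
    convert cycleMassIs_tent (s := 0) (L := k.val) h0 (by omega) hk.le fun v hv hvn => ?_ using 1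
    · omega
    rw [hchips v hv hvn]
    split_ifs <;> omega

lemma ncard_cycleStable_cycleRecurrent_cycleMassIs (h0 : 0 < i₀) (hn : i₀ < n) (M : ℕ) :
    {c : ZMod n → ℕ | CycleStable n c ∧ CycleRecurrent n c ∧ CycleMassIs n c i₀ M}.ncard =
      ((Finset.range n).filter (avalancheMass n i₀ · = M)).card := by
  have hset : {c : ZMod n → ℕ | CycleStable n c ∧ CycleRecurrent n c ∧ CycleMassIs n c i₀ M} =
      cycleHoleConfig n '' {k | avalancheMass n i₀ k.val = M} := by
    ext c
    simp only [Set.mem_ofPred_eq, Set.mem_image, ← and_assoc, cycleStable_and_cycleRecurrent_iff]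
    constructor
    · rintro ⟨⟨k, rfl⟩, hM⟩
      exact ⟨k, (cycleMassIs_cycleHoleConfig h0 hn k).unique hM, rfl⟩
    · rintro ⟨k, rfl, rfl⟩
      exact ⟨⟨k, rfl⟩, cycleMassIs_cycleHoleConfig h0 hn k⟩
  rw [hset, Set.ncard_image_of_injective _ cycleHoleConfig_injective]
  exact ZMod.ncard_setOf_val (avalancheMass n i₀ · = M)

end Mass

/-- On the cycle of length `n` with dissipative vertex `0`, adding a chip at
`v_{i₀}` (with `2·i₀ ≤ n`), the probability (uniform over the `n` recurrent
configurations) that the triggered avalanche has mass `M` is: `0` if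
`0 < M < i₀`; `1/n` if `i₀ ≤ M ≤ n-1-i₀`; `2/n` if `n-i₀ ≤ M < n-1`; and `1/n`
for `M = 0` and for `M = n-1`. -/
theorem cycle_avalanche_mass_distribution (n : ℕ) [NeZero n]
    (i₀ : ℕ) (hi₀ : 1 ≤ i₀) (hi₀n : 2 * i₀ ≤ n) (M : ℕ) :
    (M = 0 →
      ({c : ZMod n → ℕ | CycleStable n c ∧ CycleRecurrent n c ∧
        CycleMassIs n c (i₀ : ZMod n) M}.ncard : ℚ) / n = 1 / n) ∧
    (0 < M → M < i₀ →
      ({c : ZMod n → ℕ | CycleStable n c ∧ CycleRecurrent n c ∧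
        CycleMassIs n c (i₀ : ZMod n) M}.ncard : ℚ) / n = 0) ∧
    (i₀ ≤ M → M + i₀ + 1 ≤ n →
      ({c : ZMod n → ℕ | CycleStable n c ∧ CycleRecurrent n c ∧
        CycleMassIs n c (i₀ : ZMod n) M}.ncard : ℚ) / n = 1 / n) ∧
    (n ≤ M + i₀ → M + 1 < n →
      ({c : ZMod n → ℕ | CycleStable n c ∧ CycleRecurrent n c ∧
        CycleMassIs n c (i₀ : ZMod n) M}.ncard : ℚ) / n = 2 / n) ∧
    (M + 1 = n →
      ({c : ZMod n → ℕ | CycleStable n c ∧ CycleRecurrent n c ∧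
        CycleMassIs n c (i₀ : ZMod n) M}.ncard : ℚ) / n = 1 / n) := by
  rw [ncard_cycleStable_cycleRecurrent_cycleMassIs (by omega) (by omega)]
  have holes_eq {S : Finset ℕ} (hS : ∀ a, a < n ∧ avalancheMass n i₀ a = M ↔ a ∈ S) :
      (Finset.range n).filter (avalancheMass n i₀ · = M) = S := by
    ext a
    simpa using hS a
  refine ⟨fun hM => ?_, fun hM hMi => ?_, fun hM hMn => ?_, fun hM hMn => ?_, fun hM => ?_⟩
  · rw [holes_eq (S := {i₀}) fun a => by grind [avalancheMass]]
    simp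
  · rw [holes_eq (S := ∅) fun a => by grind [avalancheMass]]
    simp
  · rw [holes_eq (S := {M + 1}) fun a => by grind [avalancheMass]]
    simp
  · rw [holes_eq (S := {M + 1, n - 1 - M}) fun a => by grind [avalancheMass],
      Finset.card_pair (by omega)]
    norm_num
  · rw [holes_eq (S := {0}) fun a => by grind [avalancheMass]]
    simp
end

section
/- Let {a_i}_{i≥1} be a strictly increasing sequence of positive integers with a_1 ≥ 1 such that a_{i+1} − a_i = 1 except at indices i belonging to an increasing sequence {T_j}_{j≥1}, where a_{T_j + 1} − a_{T_j} = m_j + 1 for positive even integers m_j. Suppose m_j ≤ 2j for all sufficiently large j and T_j/j → ∞. Then a(i+1)/a(i) → 1 as i → ∞. -/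
/-!
Since `a i ≥ i`, it suffices that the increments `a (i + 1) - a i` are `o(i)`. Off the jump
indices they equal `1`; at `i = T j` the increment is `m j + 1 = O(j) = o(T j)`, and the finitely
many `j` for which this bound fails at a given scale only spoil finitely many indices `i = T j`.
-/

open Filter Asymptotics

theorem eventually_cofinite_forall_apply_eq_imp {α β : Type*} {P : β → Prop} (T : β → α)
    (hP : ∀ᶠ j in cofinite, P j) : ∀ᶠ i in cofinite, ∀ j, T j = i → P j := by
  rw [eventually_cofinite] at hP ⊢
  refine (hP.image T).subset fun i hi => ?_
  push Not at hi
  obtain ⟨j, hj, hPj⟩ := hi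
  exact ⟨j, hPj, hj⟩

theorem le_apply_of_lt_succ {a : ℕ → ℕ} (ha1 : 1 ≤ a 1)
    (hmono : ∀ i, 1 ≤ i → a i < a (i + 1)) {i : ℕ} (hi : 1 ≤ i) : i ≤ a i := by
  induction i, hi using Nat.le_induction with
  | base => exact ha1
  | succ i hi ih => exact ih.trans_lt (hmono i hi)

theorem one_isLittleO_natCast : (fun _ : ℕ => (1 : ℝ)) =o[atTop] (fun i : ℕ => (i : ℝ)) :=
  (isLittleO_const_id_atTop (1 : ℝ)).natCast_atTop

theorem isLittleO_succ_sub_of_jumps {a T m : ℕ → ℕ}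
    (hjump : ∀ j, 1 ≤ j → a (T j + 1) = a (T j) + m j + 1)
    (hstep : ∀ i, 1 ≤ i → (∀ j, 1 ≤ j → T j ≠ i) → a (i + 1) = a i + 1)
    (hjumps : (fun j => (m j : ℝ) + 1) =o[atTop] (fun j => (T j : ℝ))) :
    (fun i => (a (i + 1) : ℝ) - a i) =o[atTop] (fun i : ℕ => (i : ℝ)) := by
  refine isLittleO_iff.2 fun c hc => ?_
  have hjump_le : ∀ᶠ i in atTop, ∀ j, T j = i → ‖(m j : ℝ) + 1‖ ≤ c * ‖(T j : ℝ)‖ := by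
    rw [← Nat.cofinite_eq_atTop] at hjumps ⊢
    exact eventually_cofinite_forall_apply_eq_imp T (isLittleO_iff.1 hjumps hc)
  filter_upwards [hjump_le, isLittleO_iff.1 one_isLittleO_natCast hc, eventually_ge_atTop 1]
    with i hjump_i hstep_i hi
  by_cases h : ∃ j, 1 ≤ j ∧ T j = i
  · obtain ⟨j, hj, rfl⟩ := h
    rw [hjump j hj]
    push_cast
    simpa [add_assoc] using hjump_i j rfl
  · push Not at h
    rw [hstep i hi h]
    push_cast
    simpa using hstep_i

theorem increment_sequence_ratio_tendsto_one_general (a T m : ℕ → ℕ)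
    (ha1 : 1 ≤ a 1) (hmono : ∀ i, 1 ≤ i → a i < a (i + 1))
    (hjump : ∀ j, 1 ≤ j → a (T j + 1) = a (T j) + m j + 1)
    (hstep : ∀ i, 1 ≤ i → (∀ j, 1 ≤ j → T j ≠ i) → a (i + 1) = a i + 1)
    (hmj : ∃ j₀, ∀ j, j₀ ≤ j → m j ≤ 2 * j)
    (hTj : Filter.Tendsto (fun j => (T j : ℝ) / j) Filter.atTop Filter.atTop) :
    Filter.Tendsto (fun i => (a (i + 1) : ℝ) / a i) Filter.atTop (nhds 1) := by
  have hm_bigO : (fun j => (m j : ℝ)) =O[atTop] (fun j : ℕ => (j : ℝ)) :=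
    IsBigO.of_bound 2 <| (eventually_atTop.2 hmj).mono fun j hj => by
      simpa using (by exact_mod_cast hj : (m j : ℝ) ≤ 2 * j)
  have hjumps : (fun j => (m j : ℝ) + 1) =o[atTop] (fun j => (T j : ℝ)) :=
    (hm_bigO.add one_isLittleO_natCast.isBigO).trans_isLittleO (.of_tendsto_div_atTop hTj)
  have hindex : ∀ᶠ i in atTop, 1 ≤ i ∧ i ≤ a i :=
    (eventually_ge_atTop 1).mono fun i hi => ⟨hi, le_apply_of_lt_succ ha1 hmono hi⟩
  have hindex_bigO : (fun i : ℕ => (i : ℝ)) =O[atTop] (fun i => (a i : ℝ)) :=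
    IsBigO.of_bound 1 <| hindex.mono fun i hi => by
      simpa using (Nat.cast_le.2 hi.2 : (i : ℝ) ≤ a i)
  refine (isEquivalent_iff_tendsto_one ?_).1
    ((isLittleO_succ_sub_of_jumps hjump hstep hjumps).trans_isBigO hindex_bigO)
  filter_upwards [hindex] with i hi
  exact Nat.cast_ne_zero.2 (by omega)

/-- Let `{a i}` (for `i ≥ 1`) be a strictly increasing sequence of positive
integers whose increments are `1` except at the indices `T j` (a strictly
increasing sequence), where `a (T j + 1) − a (T j) = m j + 1` for positive
even integers `m j`.  If `m j ≤ 2j` for all sufficiently large `j` and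
`T j / j → ∞`, then `a (i+1) / a i → 1` as `i → ∞`. -/
theorem increment_sequence_ratio_tendsto_one (a T m : ℕ → ℕ)
    (ha1 : 1 ≤ a 1) (hmono : ∀ i, 1 ≤ i → a i < a (i + 1))
    (hT : StrictMono T) (hT1 : 1 ≤ T 1)
    (hm : ∀ j, 1 ≤ j → 0 < m j ∧ Even (m j))
    (hjump : ∀ j, 1 ≤ j → a (T j + 1) = a (T j) + m j + 1)
    (hstep : ∀ i, 1 ≤ i → (∀ j, 1 ≤ j → T j ≠ i) → a (i + 1) = a i + 1)
    (hmj : ∃ j₀, ∀ j, j₀ ≤ j → m j ≤ 2 * j)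
    (hTj : Filter.Tendsto (fun j => (T j : ℝ) / j) Filter.atTop Filter.atTop) :
    Filter.Tendsto (fun i => (a (i + 1) : ℝ) / a i) Filter.atTop (nhds 1) :=
  increment_sequence_ratio_tendsto_one_general a T m ha1 hmono hjump hstep hmj hTj
end
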